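/- Let p, q, a, b be positive integers with 0 < a < p, 0 < b < q, and b·p − a·q = ±1. Then the only points of ℤ² contained in the closed quadrilateral with vertices (p,0), (p−a, b), (0, q), (a, q−b) are these four vertices. -/

import Mathlib

/-!
The quadrilateral is the parallelogram spanned at `P = (p, 0)` by `u = (-a, b)` and
`v = (a - p, q - b)`, and `b * p - a * q` is the determinant of `u, v`. A point
`P + s • u + t • v` of the parallelogram has coordinates `s, t ∈ [0, 1]`, which by Cramer's rule
are integers when the point is a lattice point, since the determinant is a unit of `ℤ`.
Hence `s, t ∈ {0, 1}` and the point is a vertex.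
-/

open Set

section Parallelogram

variable {E : Type*} [AddCommGroup E] [Module ℝ E]

theorem convex_parallelogram (P u v : E) :
    Convex ℝ {w | ∃ s ∈ Icc (0 : ℝ) 1, ∃ t ∈ Icc (0 : ℝ) 1, w = P + s • u + t • v} := by
  rintro _ ⟨s₁, hs₁, t₁, ht₁, rfl⟩ _ ⟨s₂, hs₂, t₂, ht₂, rfl⟩ α β hα hβ hαβ
  refine ⟨α * s₁ + β * s₂, convex_Icc 0 1 hs₁ hs₂ hα hβ hαβ,
    α * t₁ + β * t₂, convex_Icc 0 1 ht₁ ht₂ hα hβ hαβ, ?_⟩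
  linear_combination (norm := module) hαβ • P

theorem convexHull_subset_parallelogram (P u v : E) :
    convexHull ℝ {P, P + u, P + u + v, P + v} ⊆
      {w | ∃ s ∈ Icc (0 : ℝ) 1, ∃ t ∈ Icc (0 : ℝ) 1, w = P + s • u + t • v} := by
  refine convexHull_min ?_ (convex_parallelogram P u v)
  have h0 : (0 : ℝ) ∈ Icc (0 : ℝ) 1 := by simp
  have h1 : (1 : ℝ) ∈ Icc (0 : ℝ) 1 := by simp
  rintro w (rfl | rfl | rfl | rfl)
  · exact ⟨0, h0, 0, h0, by simp⟩
  · exact ⟨1, h1, 0, h0, by simp⟩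
  · exact ⟨1, h1, 1, h1, by simp⟩
  · exact ⟨0, h0, 1, h1, by simp⟩

end Parallelogram

section Cross

variable {R : Type*} [CommRing R]

def cross (u v : R × R) : R := u.1 * v.2 - u.2 * v.1

theorem cross_smul_add_smul_left (s t : R) (u v : R × R) :
    cross (s • u + t • v) v = s * cross u v := by
  simp only [cross, Prod.fst_add, Prod.snd_add, Prod.smul_fst, Prod.smul_snd, smul_eq_mul]
  ring

theorem cross_smul_add_smul_right (s t : R) (u v : R × R) :
    cross u (s • u + t • v) = t * cross u v := by
  simp only [cross, Prod.fst_add, Prod.snd_add, Prod.smul_fst, Prod.smul_snd, smul_eq_mul]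
  ring

theorem cross_smul_add_cross_smul (u v w : R × R) :
    cross w v • u + cross u w • v = cross u v • w := by
  ext <;> simp only [cross, Prod.fst_add, Prod.snd_add, Prod.smul_fst, Prod.smul_snd,
    smul_eq_mul] <;> ring

theorem map_cross {S : Type*} [CommRing S] (f : R →+* S) (u v : R × R) :
    cross (f.prodMap f u) (f.prodMap f v) = f (cross u v) := by
  simp [cross]

end Cross

theorem Int.eq_zero_or_eq_one_of_cast_mem_Icc {m : ℤ} (hm : (m : ℝ) ∈ Icc (0 : ℝ) 1) :
    m = 0 ∨ m = 1 := by
  obtain ⟨h0, h1⟩ := hm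
  have : 0 ≤ m := by exact_mod_cast h0
  have : m ≤ 1 := by exact_mod_cast h1
  omega

local notation "toℝ²" => RingHom.prodMap (Int.castRingHom ℝ) (Int.castRingHom ℝ)

theorem eq_vertex_of_mem_parallelogram {P u v z : ℤ × ℤ} (huv : IsUnit (cross u v))
    {s t : ℝ} (hs : s ∈ Icc (0 : ℝ) 1) (ht : t ∈ Icc (0 : ℝ) 1)
    (hz : toℝ² (z - P) = s • toℝ² u + t • toℝ² v) :
    z = P ∨ z = P + u ∨ z = P + u + v ∨ z = P + v := by
  set d := cross u v
  have hd : d * d = 1 := Int.isUnit_mul_self huv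
  set m := d * cross (z - P) v
  set n := d * cross u (z - P)
  have hzP : z - P = m • u + n • v := by
    rw [mul_smul, mul_smul, ← smul_add, cross_smul_add_cross_smul, smul_smul, hd, one_smul]
  have hcast (k : ℤ) (r : ℝ) (hk : (k : ℝ) = r * d) : ((d * k : ℤ) : ℝ) = r := by
    rw [Int.cast_mul, hk, mul_left_comm, ← Int.cast_mul, hd, Int.cast_one, mul_one]
  have hm : (m : ℝ) = s := hcast _ _ <| by
    rw [← eq_intCast (Int.castRingHom ℝ), ← map_cross, hz, cross_smul_add_smul_left,
      map_cross, eq_intCast]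
  have hn : (n : ℝ) = t := hcast _ _ <| by
    rw [← eq_intCast (Int.castRingHom ℝ), ← map_cross, hz, cross_smul_add_smul_right,
      map_cross, eq_intCast]
  rw [sub_eq_iff_eq_add'] at hzP
  rcases Int.eq_zero_or_eq_one_of_cast_mem_Icc (hm ▸ hs) with hm0 | hm1 <;>
    rcases Int.eq_zero_or_eq_one_of_cast_mem_Icc (hn ▸ ht) with hn0 | hn1 <;>
    simp_all [add_assoc]

theorem eq_vertex_of_mem_convexHull {P u v z : ℤ × ℤ} (huv : IsUnit (cross u v))
    (hz : toℝ² z ∈ convexHull ℝ {toℝ² P, toℝ² (P + u), toℝ² (P + u + v), toℝ² (P + v)}) :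
    z = P ∨ z = P + u ∨ z = P + u + v ∨ z = P + v := by
  simp only [map_add] at hz
  obtain ⟨s, hs, t, ht, hz⟩ := convexHull_subset_parallelogram _ _ _ hz
  refine eq_vertex_of_mem_parallelogram huv hs ht ?_
  rw [map_sub, hz]
  abel

theorem stmt1_general (p q a b : ℤ)
    (huni : b * p - a * q = 1 ∨ b * p - a * q = -1) :
    ∀ z : ℤ × ℤ,
      ((z.1 : ℝ), (z.2 : ℝ)) ∈
        convexHull ℝ
          ({((p : ℝ), (0 : ℝ)), (((p - a : ℤ) : ℝ), (b : ℝ)), ((0 : ℝ), (q : ℝ)),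
            ((a : ℝ), ((q - b : ℤ) : ℝ))} : Set (ℝ × ℝ)) →
      z = (p, 0) ∨ z = (p - a, b) ∨ z = (0, q) ∨ z = (a, q - b) := by
  intro z hz
  have huv : IsUnit (cross ((-a, b) : ℤ × ℤ) (a - p, q - b)) := by
    rw [Int.isUnit_iff, cross]
    convert huni using 2 <;> ring
  have hz' : toℝ² z ∈ convexHull ℝ {toℝ² (p, 0), toℝ² ((p, 0) + (-a, b)),
      toℝ² ((p, 0) + (-a, b) + (a - p, q - b)), toℝ² ((p, 0) + (a - p, q - b))} := by
    convert hz using 2 <;> simp; ring_nf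
  simpa [Prod.ext_iff, sub_eq_add_neg] using eq_vertex_of_mem_convexHull huv hz'

/-- the only lattice points in the closed quadrilateral with vertices
`(p,0), (p-a,b), (0,q), (a,q-b)` (where `b*p - a*q = ±1`) are the four vertices. -/
theorem stmt1 (p q a b : ℤ) (ha0 : 0 < a) (hap : a < p) (hb0 : 0 < b) (hbq : b < q)
    (huni : b * p - a * q = 1 ∨ b * p - a * q = -1) :
    ∀ z : ℤ × ℤ,
      ((z.1 : ℝ), (z.2 : ℝ)) ∈
        convexHull ℝ
          ({((p : ℝ), (0 : ℝ)), (((p - a : ℤ) : ℝ), (b : ℝ)), ((0 : ℝ), (q : ℝ)),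
            ((a : ℝ), ((q - b : ℤ) : ℝ))} : Set (ℝ × ℝ)) →
      z = (p, 0) ∨ z = (p - a, b) ∨ z = (0, q) ∨ z = (a, q - b) :=
  stmt1_general p q a b huni
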